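/- Let m, p ≥ 1, let g₁, …, g_m : ℕ → ℝ^p be square-summable signals, and let k₁, …, k_m > 0. Then for every η > 0 there exist times t₁, …, t_m ∈ ℕ such that ‖∑_{i=1}^m k_i • shift_{t_i} g_i‖₂² ≥ ∑_{i=1}^m k_i² ‖g_i‖₂² − η. (Impulses activated at sufficiently separated times make the cross-terms in the output energy arbitrarily small.) -/

import Mathlib

/-- Time shift of a signal: `(shift t₀ g) t = g (t - t₀)` if `t ≥ t₀`, and `0` otherwise. -/
noncomputable def shift {E : Type*} [Zero E] (t₀ : ℕ) (g : ℕ → E) : ℕ → E :=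
  fun t => if t₀ ≤ t then g (t - t₀) else 0

/-- ℓ²-norm of a signal. -/
noncomputable def l2norm {E : Type*} [NormedAddCommGroup E] (y : ℕ → E) : ℝ :=
  Real.sqrt (∑' t, ‖y t‖ ^ 2)

/-!
Embed the signals in the Hilbert space `ℓ²(ℕ, E)`, where shifting is a linear isometry. Since
`⟪x, shift d y⟫` only involves the tail of `x` beyond `d`, it tends to `0` as `d → ∞`. Shifting
the `i`-th impulse to time `i * D`, all cross terms of `‖∑ i, k i • shift (i * D) (g i)‖²` thus
vanish as `D → ∞`, while the diagonal terms stay equal to `k i ² ‖g i‖²`.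
-/

open Filter Topology Finset
open scoped ENNReal RealInnerProductSpace

theorem tsum_nat_add_of_eq_zero {M : Type*} [AddCommMonoid M] [TopologicalSpace M]
    {φ : ℕ → M} {t₀ : ℕ} (h : ∀ t < t₀, φ t = 0) : ∑' c, φ (c + t₀) = ∑' t, φ t := by
  refine (add_left_injective t₀).tsum_eq fun t ht => ⟨t - t₀, ?_⟩
  have : t₀ ≤ t := by_contra fun hlt => ht (h t (not_le.mp hlt))
  exact Nat.sub_add_cancel this

section Shift

variable {E : Type*}

theorem shift_apply_of_lt [Zero E] (g : ℕ → E) {t₀ t : ℕ} (h : t < t₀) : shift t₀ g t = 0 :=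
  if_neg (not_le.mpr h)

@[simp]
theorem shift_apply_add [Zero E] (g : ℕ → E) (t₀ c : ℕ) : shift t₀ g (c + t₀) = g c := by
  simp [shift]

theorem shift_shift [Zero E] (g : ℕ → E) (s d : ℕ) : shift s (shift d g) = shift (s + d) g := by
  ext t
  unfold shift
  split_ifs <;> first | rfl | (congr 1; omega)

theorem shift_add [AddZeroClass E] (f g : ℕ → E) (t₀ : ℕ) :
    shift t₀ (f + g) = shift t₀ f + shift t₀ g := by
  ext t
  simp only [shift, Pi.add_apply]
  split_ifs <;> simp

theorem shift_smul {R : Type*} [Zero E] [SMulZeroClass R E] (c : R) (g : ℕ → E) (t₀ : ℕ) :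
    shift t₀ (c • g) = c • shift t₀ g := by
  ext t
  simp only [shift, Pi.smul_apply]
  split_ifs <;> simp

theorem tsum_comp_shift {M : Type*} [Zero E] [AddCommMonoid M] [TopologicalSpace M]
    {φ : E → M} (hφ : φ 0 = 0) (g : ℕ → E) (t₀ : ℕ) :
    ∑' t, φ (shift t₀ g t) = ∑' t, φ (g t) := by
  rw [← tsum_nat_add_of_eq_zero fun t ht => by rw [shift_apply_of_lt g ht, hφ]]
  simp

theorem summable_comp_shift_iff {G : Type*} [Zero E] [AddCommGroup G] [TopologicalSpace G]
    [IsTopologicalAddGroup G] (φ : E → G) (g : ℕ → E) (t₀ : ℕ) :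
    Summable (fun t => φ (shift t₀ g t)) ↔ Summable (fun t => φ (g t)) := by
  rw [← summable_nat_add_iff t₀]
  simp

end Shift

section lp

variable {E : Type*} [NormedAddCommGroup E] {p : ℝ≥0∞}

theorem Memℓp.shift {f : ℕ → E} (hf : Memℓp f p) (hp : 0 < p.toReal) (t₀ : ℕ) :
    Memℓp (shift t₀ f) p := by
  rw [memℓp_gen_iff hp] at hf ⊢
  rwa [summable_comp_shift_iff fun v : E => ‖v‖ ^ p.toReal]

theorem Memℓp.nat_add {f : ℕ → E} (hf : Memℓp f p) (hp : 0 < p.toReal) (d : ℕ) :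
    Memℓp (fun c => f (c + d)) p := by
  rw [memℓp_gen_iff hp] at hf ⊢
  exact (summable_nat_add_iff d).mpr hf

theorem lp.norm_sq_eq_tsum (f : lp (fun _ : ℕ => E) 2) : ‖f‖ ^ 2 = ∑' t, ‖f t‖ ^ 2 := by
  simpa only [ENNReal.toReal_ofNat, Real.rpow_two] using lp.norm_rpow_eq_tsum (p := 2) (by simp) f

theorem l2norm_coe (f : lp (fun _ : ℕ => E) 2) : l2norm ⇑f = ‖f‖ := by
  rw [l2norm, ← lp.norm_sq_eq_tsum, Real.sqrt_sq (norm_nonneg f)]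

variable [NormedSpace ℝ E]

noncomputable def lpShift (t₀ : ℕ) : lp (fun _ : ℕ => E) 2 →ₗᵢ[ℝ] lp (fun _ : ℕ => E) 2 where
  toFun f := ⟨shift t₀ f, (lp.memℓp f).shift (by simp) t₀⟩
  map_add' f g := by ext1; exact shift_add _ _ _
  map_smul' c f := by ext1; exact shift_smul _ _ _
  norm_map' f := by
    rw [← sq_eq_sq₀ (norm_nonneg _) (norm_nonneg _), lp.norm_sq_eq_tsum, lp.norm_sq_eq_tsum]
    exact tsum_comp_shift (φ := fun v : E => ‖v‖ ^ 2) (by simp) f t₀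

@[simp]
theorem coe_lpShift (t₀ : ℕ) (f : lp (fun _ : ℕ => E) 2) : ⇑(lpShift t₀ f) = shift t₀ f := rfl

theorem lpShift_lpShift (s d : ℕ) (f : lp (fun _ : ℕ => E) 2) :
    lpShift s (lpShift d f) = lpShift (s + d) f := by
  ext1; simp [shift_shift]

end lp

section Inner

theorem tendsto_norm_sum_sq_sub_sum_norm_sq {ι α F : Type*} [Fintype ι] [NormedAddCommGroup F]
    [InnerProductSpace ℝ F] {l : Filter α} {v : ι → α → F}
    (h : Pairwise fun i j => Tendsto (fun a => ⟪v i a, v j a⟫) l (𝓝 0)) :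
    Tendsto (fun a => ‖∑ i, v i a‖ ^ 2 - ∑ i, ‖v i a‖ ^ 2) l (𝓝 0) := by
  classical
  have hcross (a : α) : ‖∑ i, v i a‖ ^ 2 - ∑ i, ‖v i a‖ ^ 2 =
      ∑ i, ∑ j, if i = j then 0 else ⟪v i a, v j a⟫ := by
    have hterm (i j : ι) : (if i = j then 0 else ⟪v i a, v j a⟫) =
        ⟪v i a, v j a⟫ - if i = j then ‖v i a‖ ^ 2 else 0 := by
      split_ifs with hij
      · rw [hij, real_inner_self_eq_norm_sq, sub_self]
      · simp
    simp_rw [hterm, sum_sub_distrib, sum_ite_eq, if_pos (mem_univ _)]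
    rw [← real_inner_self_eq_norm_sq, sum_inner]
    simp_rw [inner_sum]
  have hlim : Tendsto (fun a => ∑ i, ∑ j, if i = j then 0 else ⟪v i a, v j a⟫) l
      (𝓝 (∑ _i : ι, ∑ _j : ι, 0)) :=
    tendsto_finsetSum _ fun i _ => tendsto_finsetSum _ fun j _ => by
      split_ifs with hij
      exacts [tendsto_const_nhds, h hij]
  simpa only [hcross, sum_const_zero] using hlim

variable {E : Type*} [NormedAddCommGroup E] [InnerProductSpace ℝ E]

theorem inner_lpShift_eq_tsum (x y : lp (fun _ : ℕ => E) 2) (d : ℕ) :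
    ⟪x, lpShift d y⟫ = ∑' c, ⟪x (c + d), y c⟫ := by
  rw [lp.inner_eq_tsum, ← tsum_nat_add_of_eq_zero (t₀ := d)
    fun t ht => by simp [shift_apply_of_lt _ ht]]
  simp

theorem tendsto_inner_lpShift_atTop (x y : lp (fun _ : ℕ => E) 2) :
    Tendsto (fun d => ⟪x, lpShift d y⟫) atTop (𝓝 0) := by
  let tail (d : ℕ) : lp (fun _ : ℕ => E) 2 :=
    ⟨fun c => x (c + d), (lp.memℓp x).nat_add (by simp) d⟩
  have htail : Tendsto (fun d => ‖tail d‖) atTop (𝓝 0) := by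
    simp_rw [← l2norm_coe, l2norm]
    simpa using (tendsto_sum_nat_add fun t => ‖x t‖ ^ 2).sqrt
  refine squeeze_zero_norm (fun d => ?_) (by simpa using htail.mul_const ‖y‖)
  rw [inner_lpShift_eq_tsum, ← lp.inner_eq_tsum (tail d) y]
  exact norm_inner_le_norm _ _

theorem tendsto_inner_lpShift_mul_atTop {a b : ℕ} (hab : a ≠ b) (x y : lp (fun _ : ℕ => E) 2) :
    Tendsto (fun D => ⟪lpShift (a * D) x, lpShift (b * D) y⟫) atTop (𝓝 0) := by
  wlog hlt : a < b generalizing a b x y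
  · simpa only [real_inner_comm] using this hab.symm y x (by omega)
  have hD : Tendsto (fun D => (b - a) * D) atTop atTop :=
    tendsto_id.const_mul_atTop' (by omega)
  refine ((tendsto_inner_lpShift_atTop x y).comp hD).congr fun D => ?_
  rw [Function.comp_apply, ← (lpShift (a * D)).inner_map_map, lpShift_lpShift, ← add_mul,
    Nat.add_sub_cancel' hlt.le]

end Inner

theorem separated_impulses_small_cross_terms (m p : ℕ)
    (g : Fin m → ℕ → EuclideanSpace ℝ (Fin p))
    (hg : ∀ i, Summable fun t => ‖g i t‖ ^ 2)
    (k : Fin m → ℝ)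
    (η : ℝ) (hη : 0 < η) :
    ∃ t : Fin m → ℕ,
      (∑ i, k i ^ 2 * ∑' t', ‖g i t'‖ ^ 2) - η ≤
        l2norm (fun t' => ∑ i, k i • shift (t i) (g i) t') ^ 2 := by
  let G (i : Fin m) : lp (fun _ : ℕ => EuclideanSpace ℝ (Fin p)) 2 :=
    ⟨g i, (memℓp_gen_iff (by simp)).2 (by simpa using hg i)⟩
  let v (i : Fin m) (D : ℕ) := k i • lpShift (i * D) (G i)
  have hlim := tendsto_norm_sum_sq_sub_sum_norm_sq (v := v) fun i j hij => by
    simpa only [v, real_inner_smul_left, real_inner_smul_right, mul_assoc, mul_zero] using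
      (tendsto_inner_lpShift_mul_atTop (Fin.val_ne_of_ne hij) (G i) (G j)).const_mul (k j * k i)
  obtain ⟨D, hD⟩ := (hlim.eventually (Ioi_mem_nhds (neg_lt_zero.2 hη))).exists
  refine ⟨fun i => i * D, ?_⟩
  have hnorm (i : Fin m) : ‖v i D‖ ^ 2 = k i ^ 2 * ∑' t, ‖g i t‖ ^ 2 := by
    rw [norm_smul, LinearIsometry.norm_map, mul_pow, Real.norm_eq_abs, sq_abs, lp.norm_sq_eq_tsum]
  have hcoe : (fun t => ∑ i, k i • shift (i * D) (g i) t) = ⇑(∑ i, v i D) := by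
    funext t
    simp only [v, lp.coeFn_sum, Finset.sum_apply, lp.coeFn_smul, coe_lpShift, Pi.smul_apply]
    rfl
  rw [hcoe, l2norm_coe, ← sum_congr rfl fun i _ => hnorm i]
  linarith
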